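/- Let (E, j) be a soft inductive system of normed spaces, with limit space E_∞ := C(E,j)/C_0(E) equipped with the quotient norm. If each E_n is complete (a Banach space), then E_∞ is a Banach space. -/

import Mathlib

open Filter Topology

section SoftSystems

variable {ι : Type*} [Preorder ι] {E : ι → Type*} [∀ n, NormedAddCommGroup (E n)]
  [∀ n, NormedSpace ℂ (E n)]

/-- A *soft inductive system* of normed spaces: the connecting maps `j n m : E m → E n`
(for `m ≤ n`) are linear contractions and are asymptotically transitive:
`lim_m limsup_n ‖(j n l − j n m ∘ j m l) a‖ = 0` for every `l` and `a : E l`. -/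
def IsSoftSystem (j : ∀ n m, E m →L[ℂ] E n) : Prop :=
  (∀ n m, m ≤ n → ‖j n m‖ ≤ 1) ∧
  ∀ (l : ι) (a : E l),
    Tendsto (fun m => limsup (fun n => ‖j n l a - j n m (j m l a)‖) atTop) atTop (𝓝 0)

/-- A net is *j-convergent* if `lim_m limsup_n ‖a n − j n m (a m)‖ = 0`. -/
def JConv (j : ∀ n m, E m →L[ℂ] E n) (a : ∀ n, E n) : Prop :=
  Tendsto (fun m => limsup (fun n => ‖a n - j n m (a m)‖) atTop) atTop (𝓝 0)

/-- A net is *null* if its norms tend to zero along the directed index set. -/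
def IsNullNet (a : ∀ n, E n) : Prop :=
  Tendsto (fun n => ‖a n‖) atTop (𝓝 0)

end SoftSystems

/-!
`C(E, j)` is closed in the Banach space `ℓ^∞(E)`: for each `m` the defect
`f ↦ limsup_n ‖f n - j n m (f m)‖` is `2`-Lipschitz because the connecting maps are contractions,
so the set where these equi-Lipschitz functions tend to `0` is closed. Hence `C(E, j)` is complete,
and so is its quotient by any subspace, with the quotient norm.
-/

namespace ContinuousLinearMap

variable {𝕜 F G : Type*} [NontriviallyNormedField 𝕜] [SeminormedAddCommGroup F]
  [NormedSpace 𝕜 F] [SeminormedAddCommGroup G] [NormedSpace 𝕜 G]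

theorem norm_sub_apply_le_of_opNorm_le_one (T : G →L[𝕜] F) (hT : ‖T‖ ≤ 1) (x x' : F)
    (y y' : G) : ‖x - T y‖ ≤ ‖x' - T y'‖ + (‖x - x'‖ + ‖y - y'‖) :=
  calc ‖x - T y‖ = ‖(x' - T y') + ((x - x') - T (y - y'))‖ := by rw [map_sub]; abel_nf
    _ ≤ ‖x' - T y'‖ + (‖x - x'‖ + ‖T (y - y')‖) :=
      (norm_add_le _ _).trans (by gcongr; exact norm_sub_le _ _)
    _ ≤ ‖x' - T y'‖ + (‖x - x'‖ + ‖y - y'‖) := by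
      gcongr; simpa using T.le_of_opNorm_le hT (y - y')

end ContinuousLinearMap

section Defect

variable {ι : Type*} [Preorder ι] {E : ι → Type*} [∀ n, NormedAddCommGroup (E n)]
  [∀ n, NormedSpace ℂ (E n)] (j : ∀ n m, E m →L[ℂ] E n)

/-- `JConv j f` unfolds to `Tendsto (jDefect j · f) atTop (𝓝 0)`. -/
noncomputable def jDefect (m : ι) (f : lp E ⊤) : ℝ :=
  limsup (fun n => ‖f n - j n m (f m)‖) atTop

variable {j}

theorem norm_sub_apply_le_add (hj : ∀ n m, m ≤ n → ‖j n m‖ ≤ 1) {m n : ι} (hmn : m ≤ n)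
    (f h : lp E ⊤) : ‖f n - j n m (f m)‖ ≤ ‖h n - j n m (h m)‖ + 2 * ‖f - h‖ := by
  have hf_sub_h : ∀ k, ‖f k - h k‖ ≤ ‖f - h‖ := fun k => by
    simpa using lp.norm_apply_le_norm ENNReal.top_ne_zero (f - h) k
  calc ‖f n - j n m (f m)‖ ≤ ‖h n - j n m (h m)‖ + (‖f n - h n‖ + ‖f m - h m‖) :=
        (j n m).norm_sub_apply_le_of_opNorm_le_one (hj n m hmn) _ _ _ _
    _ ≤ ‖h n - j n m (h m)‖ + 2 * ‖f - h‖ := by linarith [hf_sub_h n, hf_sub_h m]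

theorem isBoundedUnder_norm_sub_apply (hj : ∀ n m, m ≤ n → ‖j n m‖ ≤ 1) (m : ι)
    (f : lp E ⊤) : IsBoundedUnder (· ≤ ·) atTop (fun n => ‖f n - j n m (f m)‖) :=
  isBoundedUnder_of_eventually_le (a := 2 * ‖f‖) <|
    (eventually_ge_atTop m).mono fun n hmn => by
      simpa using norm_sub_apply_le_add hj hmn f 0

variable [Nonempty ι] [IsDirected ι (· ≤ ·)]

theorem jDefect_le_add (hj : ∀ n m, m ≤ n → ‖j n m‖ ≤ 1) (m : ι) (f h : lp E ⊤) :
    jDefect j m f ≤ jDefect j m h + 2 * ‖f - h‖ := by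
  have hbdd := isBoundedUnder_norm_sub_apply hj m h
  calc jDefect j m f ≤ limsup (fun n => ‖h n - j n m (h m)‖ + 2 * ‖f - h‖) atTop :=
        limsup_le_limsup
          ((eventually_ge_atTop m).mono fun n hmn => norm_sub_apply_le_add hj hmn f h)
          (isCoboundedUnder_le_of_le atTop fun n => norm_nonneg _)
          (isBoundedUnder_le_add hbdd isBoundedUnder_const)
    _ = jDefect j m h + 2 * ‖f - h‖ :=
        limsup_add_const atTop _ _ hbdd (isCoboundedUnder_le_of_le atTop fun n => norm_nonneg _)

theorem lipschitzWith_jDefect (hj : ∀ n m, m ≤ n → ‖j n m‖ ≤ 1) (m : ι) :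
    LipschitzWith 2 (jDefect j m) :=
  LipschitzWith.of_le_add_mul 2 fun f h => by
    simpa [dist_eq_norm] using jDefect_le_add hj m f h

theorem isClosed_setOf_jConv (hj : ∀ n m, m ≤ n → ‖j n m‖ ≤ 1) :
    IsClosed {f : lp E ⊤ | JConv j (fun n => f n)} :=
  (LipschitzWith.uniformEquicontinuous _ 2 (lipschitzWith_jDefect hj)).equicontinuous
    |>.isClosed_setOfPred_tendsto (f := fun _ => (0 : ℝ)) continuous_const

end Defect

theorem stmt4_general {ι : Type*} [Preorder ι] [Nonempty ι] [IsDirected ι (· ≤ ·)]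
    {E : ι → Type*} [∀ n, NormedAddCommGroup (E n)] [∀ n, NormedSpace ℂ (E n)]
    [∀ n, CompleteSpace (E n)]
    (j : ∀ n m, E m →L[ℂ] E n) (hj : IsSoftSystem j)
    (C : Submodule ℂ (lp E ⊤)) (C₀ : Submodule ℂ (lp E ⊤))
    (hC : (C : Set (lp E ⊤)) = {f : lp E ⊤ | JConv j (fun n => f n)}) :
    CompleteSpace (C ⧸ (C₀.comap C.subtype)) := by
  have hC_closed : IsClosed (C : Set (lp E ⊤)) := hC ▸ isClosed_setOf_jConv hj.1
  have : CompleteSpace C := hC_closed.completeSpace_coe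
  infer_instance

/-- If `(E, j)` is a soft inductive system of Banach spaces, then the limit
space `E_∞ = C(E,j)/C₀(E)` (the quotient of the j-convergent bounded nets by the null nets,
with the quotient norm) is a Banach space, i.e. complete. -/
theorem stmt4 {ι : Type*} [Preorder ι] [Nonempty ι] [IsDirected ι (· ≤ ·)]
    {E : ι → Type*} [∀ n, NormedAddCommGroup (E n)] [∀ n, NormedSpace ℂ (E n)]
    [∀ n, CompleteSpace (E n)]
    (j : ∀ n m, E m →L[ℂ] E n) (hj : IsSoftSystem j)
    (C : Submodule ℂ (lp E ⊤)) (C₀ : Submodule ℂ (lp E ⊤))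
    (hC : (C : Set (lp E ⊤)) = {f : lp E ⊤ | JConv j (fun n => f n)})
    (hC₀ : (C₀ : Set (lp E ⊤)) = {f : lp E ⊤ | IsNullNet (fun n => f n)}) :
    CompleteSpace (C ⧸ (C₀.comap C.subtype)) :=
  stmt4_general j hj C C₀ hC
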